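/- arXiv:2210.10181 — 2 statements merged into one kernel-verified Lean document; each statement's English description precedes it below -/
import Mathlib

section
/- Let G be a finite graph with an injective real-valued function f on its vertices, extended linearly on edges. A vertex v is a local minimum (has no neighbor of smaller f-value) if and only if, at level a = f(v), the change in connectedness Δ(a) contains a new component whose set of minima is {v}; i.e., every local minimum of f creates a new connected component in the sublevel set filtration. -/
variable {V : Type*}

/-- The connected component, within the induced subgraph of `G` on `S`, of a vertex
`v ∈ S`, viewed as a set of vertices of `G`. -/
def comp (G : SimpleGraph V) (S : Set V) (v : V) (hv : v ∈ S) : Set V :=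
  {w | ∃ hw : w ∈ S, (G.induce S).Reachable ⟨v, hv⟩ ⟨w, hw⟩}

/-- `μ(C)`: the vertices of `C` with no neighbor in `C` of smaller function value. -/
def mu (G : SimpleGraph V) (f : V → ℝ) (C : Set V) : Set V :=
  {v | v ∈ C ∧ ∀ w ∈ C, G.Adj v w → f v ≤ f w}

/-- `Γ(S)`: the identified components of the induced subgraph on `S`, each component `C`
recorded by its set of minima `μ(C)`. -/
def Gamma (G : SimpleGraph V) (f : V → ℝ) (S : Set V) : Set (Set V) :=
  {L | ∃ v, ∃ hv : v ∈ S, L = mu G f (comp G S v hv)}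

/-- `Δ(a) = Γ(f⁻¹(-∞,a]) \ Γ(f⁻¹(-∞,a))`: the change in connectedness at level `a`. -/
def Delta (G : SimpleGraph V) (f : V → ℝ) (a : ℝ) : Set (Set V) :=
  Gamma G f {v | f v ≤ a} \ Gamma G f {v | f v < a}

/-- For a finite graph with injective vertex function, a vertex `v` is a local minimum
(has no neighbor of smaller value) iff at level `a = f v` the change in connectedness
`Δ(a)` contains a new component whose set of minima is `{v}`. -/
theorem local_min_iff_new_component [Fintype V] (G : SimpleGraph V) (f : V → ℝ)
    (hf : Function.Injective f) (v : V) :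
    (∀ w, G.Adj v w → f v ≤ f w) ↔ {v} ∈ Delta G f (f v) := by
  constructor
  · intro hmin
    have hv0 : v ∈ {w | f w ≤ f v} := Set.mem_setOf_eq ▸ le_refl (f v)
    have hcomp : comp G {w | f w ≤ f v} v hv0 = {v} := by
      ext w
      constructor
      · rintro ⟨hw, ⟨p⟩⟩
        cases p with
        | nil => rfl
        | @cons _ b _ h q =>
          have hadj : G.Adj v b.val := h
          have hble : f b.val ≤ f v := b.prop
          have : f v ≤ f b.val := hmin _ hadj
          have hb : b.val = v := hf (le_antisymm hble this)
          exact absurd (hb ▸ hadj) (G.irrefl)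
      · rintro rfl
        exact ⟨hv0, SimpleGraph.Reachable.refl _⟩
    constructor
    · refine ⟨v, hv0, ?_⟩
      rw [hcomp]
      ext w
      simp only [mu, Set.mem_setOf_eq, Set.mem_singleton_iff]
      constructor
      · rintro rfl
        refine ⟨rfl, ?_⟩
        rintro x rfl hx
        exact absurd hx (G.irrefl)
      · rintro ⟨rfl, _⟩
        rfl
    · rintro ⟨u, hu, heq⟩
      have hmu : v ∈ mu G f (comp G {w | f w < f v} u hu) := by
        rw [← heq]; rfl
      obtain ⟨hvlt, -⟩ := hmu.1
      simp only [Set.mem_setOf_eq] at hvlt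
      exact lt_irrefl _ hvlt
  · rintro ⟨⟨u, hu, heq⟩, -⟩
    intro w hadj
    by_contra hlt
    push_neg at hlt
    have hmu : v ∈ mu G f (comp G {x | f x ≤ f v} u hu) := by
      rw [← heq]; rfl
    obtain ⟨hvS, rv⟩ := hmu.1
    have hwS : w ∈ {x | f x ≤ f v} := le_of_lt hlt
    have hwc : w ∈ comp G {x | f x ≤ f v} u hu := by
      refine ⟨hwS, rv.trans (SimpleGraph.Adj.reachable ?_)⟩
      exact hadj
    have := hmu.2 w hwc hadj
    linarith
end

section
/- Let G be a finite connected graph with injective vertex function f. Then the merge tree M of (G,f) as defined by vertex set {L : L ∈ Δ(a), a ∈ ℝ} and edges between L₁ ∈ Δ(a) and L₂ ∈ Γ((-∞,a)) with L₂ ⊂ L₁, is acyclic and connected, i.e., a tree. -/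
variable {V : Type*}

/-- The vertices of the merge tree: the sets `L` appearing in some `Δ(a)`. -/
def MergeVert (G : SimpleGraph V) (f : V → ℝ) : Type _ :=
  {L : Set V // ∃ a : ℝ, L ∈ Delta G f a}

/-- The (directed) edge relation of the merge tree: `L₁ ∈ Δ(a)`, `L₂ ∈ Γ(f⁻¹(-∞,a))`
and `L₂ ⊊ L₁`. -/
def mergeAdjAux (G : SimpleGraph V) (f : V → ℝ) (L₁ L₂ : Set V) : Prop :=
  ∃ a : ℝ, L₁ ∈ Delta G f a ∧ L₂ ∈ Gamma G f {v | f v < a} ∧ L₂ ⊂ L₁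

/-- The merge tree of `(G, f)` as a simple graph on the vertex set `MergeVert G f`. -/
def MergeGraph (G : SimpleGraph V) (f : V → ℝ) : SimpleGraph (MergeVert G f) where
  Adj L₁ L₂ := mergeAdjAux G f L₁.1 L₂.1 ∨ mergeAdjAux G f L₂.1 L₁.1
  symm := by
    constructor
    intro L₁ L₂ h
    exact h.symm
  loopless := by
    constructor
    rintro L (⟨a, _, _, h⟩ | ⟨a, _, _, h⟩) <;> exact (ssubset_irrefl _ h)

/-
In a sublevel set `f⁻¹(-∞, a]` every neighbour of a vertex that is lower than it lies in the same
component, so `μ(C)` is just `C` intersected with the set of local minima of `f` on all of `G`.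
Hence distinct components give disjoint, nonempty elements of `Γ`, and passing to a higher level
can only enlarge them. Orient every edge of the merge tree from the smaller set `L₂` to the larger
set `L₁`. The parent of a vertex is unique: two candidate parents born at different levels would
force one to lie inside the child. Every vertex other than the set of all local minima (the root,
born when `G` becomes connected) has a parent: at the level right after the last one at which it
is still a component it merges into a strictly larger one. Since parents strictly contain their
children, climbing to parents reaches the root, and a cycle would give its `⊆`-minimal vertex two
distinct parents.
-/

namespace SimpleGraph

variable {W α : Type*} {H : SimpleGraph W}

theorem reachable_of_forall_exists_adj_lt [Preorder α] [WellFoundedGT α] (m : W → α) {r : W}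
    (h : ∀ x ≠ r, ∃ y, H.Adj x y ∧ m x < m y) (x : W) : H.Reachable x r := by
  induction x using (InvImage.wf m wellFounded_gt).induction with
  | _ x ih =>
    by_cases hx : x = r
    · exact hx ▸ Reachable.refl x
    · obtain ⟨y, hxy, hlt⟩ := h x hx
      exact hxy.reachable.trans (ih y hlt)

theorem connected_of_forall_exists_adj_lt [Preorder α] [WellFoundedGT α] (m : W → α) (r : W)
    (h : ∀ x ≠ r, ∃ y, H.Adj x y ∧ m x < m y) : H.Connected :=
  have := Nonempty.intro r
  ⟨fun x y => (reachable_of_forall_exists_adj_lt m h x).trans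
    (reachable_of_forall_exists_adj_lt m h y).symm⟩

/-- `P x y` reads "`y` is the parent of `x`". -/
theorem isAcyclic_of_unique_parent [PartialOrder α] (m : W → α) (P : W → W → Prop)
    (hadj : ∀ {x y}, H.Adj x y → P x y ∨ P y x) (hlt : ∀ {x y}, P x y → m x < m y)
    (huniq : ∀ {x y z}, P x y → P x z → y = z) : H.IsAcyclic := by
  intro v c hc
  obtain ⟨u, hu, hmin⟩ := Set.Finite.exists_minimalFor m {w | w ∈ c.support}
    c.support.finite_toSet ⟨v, c.start_mem_support⟩
  have hpar : ∀ w ∈ c.toSubgraph.neighborSet u, P u w := by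
    intro w hw
    refine (hadj hw.adj_sub).resolve_right fun hwu => (hlt hwu).not_ge (hmin ?_ (hlt hwu).le)
    simpa using hw.snd_mem
  obtain ⟨w, w', hne, hnbr⟩ := Set.ncard_eq_two.1 (hc.ncard_neighborSet_toSubgraph_eq_two hu)
  exact hne (huniq (hpar w (by simp [hnbr])) (hpar w' (by simp [hnbr])))

end SimpleGraph

section MergeTree

open SimpleGraph Set

variable {G : SimpleGraph V} {f : V → ℝ} {S T : Set V} {L L₁ L₂ : Set V}

def IsDownClosed (f : V → ℝ) (S : Set V) : Prop :=
  ∀ ⦃x y⦄, x ∈ S → f y ≤ f x → y ∈ S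

theorem isDownClosed_sublevel_le (a : ℝ) : IsDownClosed f {v | f v ≤ a} :=
  fun _ _ hx hy => hy.trans hx

theorem isDownClosed_sublevel_lt (a : ℝ) : IsDownClosed f {v | f v < a} :=
  fun _ _ hx hy => hy.trans_lt hx

theorem exists_eq_sublevel [Finite V] (hS : IsDownClosed f S) (hne : S.Nonempty) :
    ∃ w ∈ S, S = {x | f x ≤ f w} := by
  obtain ⟨w, hw, hmax⟩ := S.exists_max_image f S.toFinite hne
  exact ⟨w, hw, Set.ext fun x => ⟨hmax x, fun hx => hS hw hx⟩⟩

theorem exists_sublevel_lt_eq_sublevel_le [Finite V] {w₀ : V} (h : ∃ w, f w₀ < f w) :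
    ∃ w₁, f w₀ < f w₁ ∧ {x | f x < f w₁} = {x | f x ≤ f w₀} := by
  obtain ⟨w₁, hw₁, hmin⟩ := {w | f w₀ < f w}.exists_min_image f (Set.toFinite _) h
  refine ⟨w₁, hw₁, Set.ext fun x => ⟨fun hx => ?_, fun (hx : f x ≤ f w₀) => hx.trans_lt hw₁⟩⟩
  exact not_lt.1 fun (hlt : f w₀ < f x) => (hmin x hlt).not_gt hx

theorem mem_comp_self {v : V} (hv : v ∈ S) : v ∈ comp G S v hv :=
  ⟨hv, Reachable.refl _⟩

theorem comp_mono (hST : S ⊆ T) {v : V} (hv : v ∈ S) : comp G S v hv ⊆ comp G T v (hST hv) :=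
  fun _ ⟨hw, hr⟩ => ⟨hST hw, hr.map (G.induceHomOfLE hST).toHom⟩

theorem comp_eq_of_mem {v w : V} (hv : v ∈ S) (hw : w ∈ comp G S v hv) :
    comp G S w hw.1 = comp G S v hv := by
  ext u
  exact ⟨fun ⟨hu, hr⟩ => ⟨hu, hw.2.trans hr⟩, fun ⟨hu, hr⟩ => ⟨hu, hw.2.symm.trans hr⟩⟩

theorem mem_comp_of_adj {v u w : V} (hv : v ∈ S) (hu : u ∈ comp G S v hv) (hw : w ∈ S)
    (hadj : G.Adj u w) : w ∈ comp G S v hv :=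
  ⟨hw, hu.2.trans (Adj.reachable (G := G.induce S) (u := ⟨u, hu.1⟩) (v := ⟨w, hw⟩) hadj)⟩

theorem comp_univ (hG : G.Connected) (v : V) : comp G univ v (mem_univ v) = univ :=
  eq_univ_of_forall fun w => ⟨mem_univ w, (hG.preconnected v w).map G.induceUnivIso.symm.toHom⟩

theorem mu_comp_eq_inter (hS : IsDownClosed f S) {v : V} (hv : v ∈ S) :
    mu G f (comp G S v hv) = comp G S v hv ∩ mu G f univ := by
  ext x
  refine ⟨fun ⟨hx, hmin⟩ => ⟨hx, mem_univ x, fun w _ hxw => ?_⟩,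
    fun ⟨hx, _, hmin⟩ => ⟨hx, fun w _ => hmin w (mem_univ w)⟩⟩
  rcases le_total (f x) (f w) with hle | hle
  · exact hle
  · exact hmin w (mem_comp_of_adj hv hx (hS hx.1 hle) hxw) hxw

theorem Gamma_univ (hG : G.Connected) : Gamma G f univ = {mu G f univ} := by
  ext L
  refine ⟨fun ⟨v, _, hL⟩ => mem_singleton_iff.2 (by rw [hL, comp_univ hG]), fun hL => ?_⟩
  obtain ⟨v⟩ := hG.nonempty
  exact ⟨v, mem_univ v, by rw [hL, comp_univ hG]⟩

theorem nonempty_of_mem_Gamma [Finite V] (hL : L ∈ Gamma G f S) : L.Nonempty := by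
  obtain ⟨v, hv, rfl⟩ := hL
  obtain ⟨u, hu, hmin⟩ := (comp G S v hv).exists_min_image f (Set.toFinite _)
    ⟨v, mem_comp_self hv⟩
  exact ⟨u, hu, fun w hw _ => hmin w hw⟩

theorem eq_mu_comp_of_mem_Gamma {u : V} (hL : L ∈ Gamma G f S) (hu : u ∈ L) :
    ∃ hu' : u ∈ S, L = mu G f (comp G S u hu') := by
  obtain ⟨v, hv, rfl⟩ := hL
  exact ⟨hu.1.1, by rw [comp_eq_of_mem hv hu.1]⟩

theorem eq_of_mem_Gamma {u : V} (h₁ : L₁ ∈ Gamma G f S) (h₂ : L₂ ∈ Gamma G f S) (hu₁ : u ∈ L₁)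
    (hu₂ : u ∈ L₂) : L₁ = L₂ := by
  obtain ⟨hu, rfl⟩ := eq_mu_comp_of_mem_Gamma h₁ hu₁
  obtain ⟨_, rfl⟩ := eq_mu_comp_of_mem_Gamma h₂ hu₂
  rfl

theorem subset_mu_comp_of_mem_Gamma (hS : IsDownClosed f S) (hT : IsDownClosed f T)
    (hST : S ⊆ T) {u : V} (hL : L ∈ Gamma G f S) (hu : u ∈ L) (huT : u ∈ T) :
    L ⊆ mu G f (comp G T u huT) := by
  obtain ⟨huS, rfl⟩ := eq_mu_comp_of_mem_Gamma hL hu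
  rw [mu_comp_eq_inter hS, mu_comp_eq_inter hT]
  exact inter_subset_inter_left _ (comp_mono hST huS)

theorem exists_mem_Gamma_sublevel [Finite V] (hS : IsDownClosed f S) (hL : L ∈ Gamma G f S) :
    ∃ w, L ∈ Gamma G f {x | f x ≤ f w} := by
  obtain ⟨w, -, rfl⟩ := exists_eq_sublevel hS (let ⟨v, hv, _⟩ := hL; ⟨v, hv⟩)
  exact ⟨w, hL⟩

theorem exists_mem_Delta [Finite V] {a : ℝ} (hL : L ∈ Gamma G f {x | f x ≤ a}) :
    ∃ b, L ∈ Delta G f b := by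
  obtain ⟨w, hw, hmin⟩ := {w | L ∈ Gamma G f {x | f x ≤ f w}}.exists_min_image f
    (Set.toFinite _) (exists_mem_Gamma_sublevel (isDownClosed_sublevel_le a) hL)
  refine ⟨f w, hw, fun hlt => ?_⟩
  have ⟨v, hv, _⟩ := hlt
  obtain ⟨w', hw'w, hw'⟩ := exists_eq_sublevel (isDownClosed_sublevel_lt (f w)) ⟨v, hv⟩
  exact (hmin w' (show L ∈ Gamma G f _ from hw' ▸ hlt)).not_gt hw'w

theorem exists_mergeAdjAux_of_mem_Gamma_lt [Finite V] {d : ℝ}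
    (hlt : L ∈ Gamma G f {x | f x < d}) (hle : L ∉ Gamma G f {x | f x ≤ d}) :
    ∃ L', mergeAdjAux G f L' L := by
  obtain ⟨u, hu⟩ := nonempty_of_mem_Gamma hlt
  obtain ⟨hud, -⟩ := eq_mu_comp_of_mem_Gamma hlt hu
  have hud' : u ∈ {x | f x ≤ d} := (show f u < d from hud).le
  set L' := mu G f (comp G {x | f x ≤ d} u hud')
  have hL' : L' ∈ Gamma G f {x | f x ≤ d} := ⟨u, hud', rfl⟩
  have hLL' : L ⊆ L' := subset_mu_comp_of_mem_Gamma (isDownClosed_sublevel_lt d)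
    (isDownClosed_sublevel_le d) (fun x (hx : f x < d) => hx.le) hlt hu hud'
  have hne : L ≠ L' := fun h => hle (h ▸ hL')
  exact ⟨L', d, ⟨hL', fun h => hne (eq_of_mem_Gamma hlt h hu (hLL' hu))⟩, hlt,
    hLL'.ssubset_of_ne hne⟩

theorem exists_mergeAdjAux_of_ne [Finite V] (hG : G.Connected) {a : ℝ}
    (hL : L ∈ Gamma G f {x | f x ≤ a}) (hne : L ≠ mu G f univ) : ∃ L', mergeAdjAux G f L' L := by
  obtain ⟨w₀, hw₀, hmax⟩ := {w | L ∈ Gamma G f {x | f x ≤ f w}}.exists_max_image f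
    (Set.toFinite _) (exists_mem_Gamma_sublevel (isDownClosed_sublevel_le a) hL)
  by_cases htop : ∃ w, f w₀ < f w
  · obtain ⟨w₁, hlt, heq⟩ := exists_sublevel_lt_eq_sublevel_le htop
    exact exists_mergeAdjAux_of_mem_Gamma_lt (d := f w₁) (heq ▸ hw₀)
      fun h => (hmax w₁ h).not_gt hlt
  · push Not at htop
    have huniv : {x | f x ≤ f w₀} = univ := eq_univ_of_forall htop
    have hLuniv : L ∈ Gamma G f univ := huniv ▸ hw₀
    rw [Gamma_univ hG] at hLuniv
    exact absurd hLuniv hne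

theorem exists_mu_univ_mem_Delta [Finite V] (hG : G.Connected) :
    ∃ b, mu G f univ ∈ Delta G f b := by
  have := hG.nonempty
  obtain ⟨w, hw⟩ := Finite.exists_max f
  have hroot : mu G f univ ∈ Gamma G f {x | f x ≤ f w} := by
    rw [show {x | f x ≤ f w} = univ from eq_univ_of_forall hw, Gamma_univ hG]
    exact mem_singleton _
  exact exists_mem_Delta hroot

theorem mergeAdjAux.ssubset (h : mergeAdjAux G f L₁ L₂) : L₂ ⊂ L₁ :=
  let ⟨_, _, _, h⟩ := h; h

theorem le_of_mem_Gamma_of_ssubset [Finite V] {a a' : ℝ} (h₁ : L₁ ∈ Gamma G f {x | f x ≤ a})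
    (hL : L ∈ Gamma G f {x | f x < a'}) (hss : L ⊂ L₁) : a' ≤ a := by
  by_contra! hlt
  obtain ⟨u, hu⟩ := nonempty_of_mem_Gamma hL
  obtain ⟨hua', hLu⟩ := eq_mu_comp_of_mem_Gamma hL hu
  have hsub : {x | f x ≤ a} ⊆ {x | f x < a'} := fun x (hx : f x ≤ a) => hx.trans_lt hlt
  exact hss.not_subset (hLu ▸ subset_mu_comp_of_mem_Gamma (isDownClosed_sublevel_le a)
    (isDownClosed_sublevel_lt a') hsub h₁ (hss.subset hu) hua')

theorem eq_of_mergeAdjAux [Finite V] (h₁ : mergeAdjAux G f L₁ L) (h₂ : mergeAdjAux G f L₂ L) :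
    L₁ = L₂ := by
  obtain ⟨a, h₁Δ, h₁Γ, h₁s⟩ := h₁
  obtain ⟨a', h₂Δ, h₂Γ, h₂s⟩ := h₂
  obtain rfl : a = a' := le_antisymm (le_of_mem_Gamma_of_ssubset h₂Δ.1 h₁Γ h₂s)
    (le_of_mem_Gamma_of_ssubset h₁Δ.1 h₂Γ h₁s)
  obtain ⟨u, hu⟩ := nonempty_of_mem_Gamma h₁Γ
  exact eq_of_mem_Gamma h₁Δ.1 h₂Δ.1 (h₁s.subset hu) (h₂s.subset hu)

end MergeTree

theorem mergeGraph_is_tree_general [Fintype V] (G : SimpleGraph V) (f : V → ℝ)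
    (hG : G.Connected) :
    (MergeGraph G f).Connected ∧ (MergeGraph G f).IsAcyclic := by
  refine ⟨SimpleGraph.connected_of_forall_exists_adj_lt Subtype.val
      ⟨_, exists_mu_univ_mem_Delta hG⟩ ?_,
    SimpleGraph.isAcyclic_of_unique_parent Subtype.val (fun X Y => mergeAdjAux G f Y.1 X.1)
      Or.symm (fun h => h.ssubset) fun h₁ h₂ => Subtype.ext (eq_of_mergeAdjAux h₁ h₂)⟩
  rintro ⟨L, a, hL⟩ hne
  obtain ⟨L', hadj⟩ := exists_mergeAdjAux_of_ne hG hL.1 fun h => hne (Subtype.ext h)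
  have ⟨d, hd, _⟩ := hadj
  exact ⟨⟨L', d, hd⟩, Or.inr hadj, hadj.ssubset⟩

/-- For a finite connected graph with injective vertex function, the merge tree is
connected and acyclic, i.e. a tree. -/
theorem mergeGraph_is_tree [Fintype V] (G : SimpleGraph V) (f : V → ℝ)
    (hG : G.Connected) (hf : Function.Injective f) :
    (MergeGraph G f).Connected ∧ (MergeGraph G f).IsAcyclic :=
  mergeGraph_is_tree_general G f hG
end
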